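/- The function f(N) = (N - 5√N + 4)/24 - (√N/π)·(ln(16N) + 2) satisfies f(N) > 6 for all real N > 13300. -/

import Mathlib

/-!
Put `t = √N`, so `t > 115.32`. The tangent line of `log` at `t = 128` gives
`ln(16N) + 2 = 4 ln 2 + 2 ln t + 2 ≤ 18 ln 2 + t/64`, so the subtracted term is at most a
quadratic in `t` whose leading coefficient `1/(64π)` is smaller than `1/24`. With
`ln 2 < 0.6931471808` and `π > 3.141592` the claim becomes a quadratic inequality in `t`,
whose margin at `t = 115.32` is only about `0.1`.
-/

open Real

theorem Real.log_le_log_add_div_sub_one {a x : ℝ} (ha : 0 < a) (hx : 0 < x) :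
    log x ≤ log a + x / a - 1 := by
  have := log_le_sub_one_of_pos (div_pos hx ha)
  rw [log_div hx.ne' ha.ne'] at this
  linarith

theorem log_sixteen_mul_sq_add_two_le {t : ℝ} (ht : 0 < t) :
    log (16 * t ^ 2) + 2 ≤ 18 * log 2 + t / 64 := by
  have h128 : log 128 = 7 * log 2 := by
    rw [show (128 : ℝ) = 2 ^ 7 by norm_num, log_pow]; norm_num
  have h16 : log 16 = 4 * log 2 := by
    rw [show (16 : ℝ) = 2 ^ 4 by norm_num, log_pow]; norm_num
  have htangent := log_le_log_add_div_sub_one (show (0 : ℝ) < 128 by norm_num) ht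
  rw [log_mul (by norm_num) (by positivity), log_pow, h16]
  push_cast
  linarith

theorem six_lt_quadratic_of_le {t : ℝ} (ht : 115.32 ≤ t) :
    6 < (t ^ 2 - 5 * t + 4) / 24 - t * (18 * 0.6931471808 + t / 64) / 3.141592 := by
  norm_num at ht ⊢
  nlinarith [sq_nonneg (t - 115.32)]

open Real in
/-- The function `f(N) = (N - 5√N + 4)/24 - (√N/π)(ln(16N) + 2)` satisfies
`f(N) > 6` for all real `N > 13300`. -/
theorem genus_lower_bound_exceeds_six (N : ℝ) (hN : N > 13300) :
    (N - 5 * Real.sqrt N + 4) / 24 - (Real.sqrt N / π) * (Real.log (16 * N) + 2) > 6 := by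
  obtain ⟨t, ht0, rfl⟩ : ∃ t : ℝ, 0 < t ∧ N = t ^ 2 :=
    ⟨√N, sqrt_pos.2 (by linarith), (sq_sqrt (by linarith)).symm⟩
  rw [sqrt_sq ht0.le]
  have ht : 115.32 ≤ t := by nlinarith
  have hlog : log (16 * t ^ 2) + 2 ≤ 18 * 0.6931471808 + t / 64 := by
    linarith [log_sixteen_mul_sq_add_two_le ht0, log_two_lt_d9]
  have hsub : t / π * (log (16 * t ^ 2) + 2)
      ≤ t * (18 * 0.6931471808 + t / 64) / 3.141592 := by
    rw [div_mul_eq_mul_div]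
    have hlog_pos : 0 < log (16 * t ^ 2) + 2 := by
      have : 0 < log (16 * t ^ 2) := log_pos (by nlinarith)
      linarith
    gcongr
    exact pi_gt_d6.le
  linarith [six_lt_quadratic_of_le ht]
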